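/- Let R be a fully symmetric 4-tensor on C^{2n}: i.e. σ(𝔕(ε¹,ε²)ε³, ε⁴) is symmetric in all four arguments, where 𝔕(ε,ε') = (1/2) Σ_{δ,γ} sign(δ) σ(𝔕(ε,ε')ε_γ, ε_{−δ}) x_{δγ}. Then in the representation π_a on Λ^a(C^{2n}) realized via the Clifford algebra, Σ_{α,β} sign(α) π_a(x_{αβ} 𝔕(ε_{−α}, ε_β)) = 0. -/

import Mathlib

/-- Index set `{±1, …, ±n}` realized as nonzero integers of absolute value at most `n`. -/
abbrev Idx (n : ℕ) := {i : ℤ // i ∈ (Finset.Icc (-(n : ℤ)) n).erase 0}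

/-- Negation on the index set. -/
def Idx.negI {n : ℕ} (α : Idx n) : Idx n :=
  ⟨-α.1, by
    have h := α.2
    simp only [Finset.mem_erase, Finset.mem_Icc] at h ⊢
    omega⟩

/-- The sign of a (nonzero) integer, as a complex scalar. -/
def sgn (a : ℤ) : ℂ := if 0 < a then 1 else -1

/-- The basis element `x_{αβ}` of `sp(n,ℂ)` acting on `ℂ^{2n}` by
`x_{αβ}(ε_ν) = δ_{β,ν} ε_α − sign(αβ) δ_{−α,ν} ε_{−β}`. -/
def spX {n : ℕ} (α β : Idx n) : Module.End ℂ (Idx n → ℂ) where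
  toFun v := fun μ => v β * (if μ = α then 1 else 0)
      - sgn (α.1 * β.1) * v α.negI * (if μ = β.negI then 1 else 0)
  map_add' u v := by funext μ; simp only [Pi.add_apply]; ring
  map_smul' c v := by
    funext μ; simp only [Pi.smul_apply, smul_eq_mul, RingHom.id_apply]; ring

/-- Exterior multiplication by the basis vector `ε_α`, as an operator on `Λ(ℂ^{2n})`. -/
noncomputable def epsOp {n : ℕ} (α : Idx n) :
    Module.End ℂ (ExteriorAlgebra ℂ (Idx n → ℂ)) :=
  LinearMap.mulLeft ℂ (ExteriorAlgebra.ι ℂ (Pi.single α 1))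

/-- Interior multiplication `ε_α† = i(ε_α*)` (contraction with the dual basis vector),
as an operator on `Λ(ℂ^{2n})`. -/
noncomputable def dagOp {n : ℕ} (α : Idx n) :
    Module.End ℂ (ExteriorAlgebra ℂ (Idx n → ℂ)) :=
  CliffordAlgebra.contractLeft ((Pi.basisFun ℂ (Idx n)).coord α)

/-!
Put `e_p = sign(p) ε_{−p}`, so that `ε_q† e_r + e_r ε_q† = σ(ε_r, ε_q)`. The substitution
`α ↦ −α`, `δ ↦ −δ` turns `sign(α) π_a(x_{αβ})` into `e_p ε_q† + e_q ε_p†`, and the symmetry of `S`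
in its first and in its last two slots reduces the sum to `4 Σ S(p,q,r,s) e_p ε_q† e_r ε_s†`.
Moving `ε_q†` past `e_r` leaves a contraction of `S` with `σ` in the middle slots, which vanishes
since `S` is symmetric and `σ` antisymmetric, and the term `Σ S(p,q,r,s) e_p e_r ε_q† ε_s†`, which
vanishes since `S` is symmetric and `e_p e_r` antisymmetric in `p, r`.
-/

open Finset

section Sums

variable {ι M : Type*} [Fintype ι]

theorem sum_sum_add_swap [AddCommMonoid M] (G : ι → ι → M) :
    ∑ i, ∑ j, (G i j + G j i) = 2 • ∑ i, ∑ j, G i j := by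
  simp only [sum_add_distrib]
  rw [sum_comm (f := fun i j => G j i), two_nsmul]

theorem sum_sum_eq_zero_of_antisymm [AddCommGroup M] [IsAddTorsionFree M] (G : ι → ι → M)
    (hG : ∀ i j, G j i = -G i j) : ∑ i, ∑ j, G i j = 0 := by
  have hsum := sum_sum_add_swap G
  have hpair : ∀ i j, G i j + G j i = 0 := fun i j => by rw [hG, neg_add_cancel]
  simp only [hpair, sum_const_zero] at hsum
  exact nsmul_right_injective two_ne_zero (hsum.symm.trans (nsmul_zero 2).symm)

theorem sum_smul_add_swap_mul_add_swap {K A : Type*} [Semiring K] [Semiring A] [Module K A]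
    (a : ι → ι → A) (S : ι → ι → ι → ι → K)
    (h12 : ∀ p q r s, S q p r s = S p q r s) (h34 : ∀ p q r s, S p q s r = S p q r s) :
    ∑ p, ∑ q, ∑ r, ∑ s, S p q r s • ((a p q + a q p) * (a r s + a s r)) =
      4 • ∑ p, ∑ q, ∑ r, ∑ s, S p q r s • (a p q * a r s) := by
  have right : ∀ p q, ∑ r, ∑ s, S p q r s • ((a p q + a q p) * (a r s + a s r)) =
      2 • ∑ r, ∑ s, S p q r s • ((a p q + a q p) * a r s) := fun p q => by
    rw [← sum_sum_add_swap]
    refine sum_congr rfl fun r _ => sum_congr rfl fun s _ => ?_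
    rw [mul_add, smul_add, h34]
  have left : ∑ p, ∑ q, ∑ r, ∑ s, S p q r s • ((a p q + a q p) * a r s) =
      2 • ∑ p, ∑ q, ∑ r, ∑ s, S p q r s • (a p q * a r s) := by
    rw [← sum_sum_add_swap]
    refine sum_congr rfl fun p _ => sum_congr rfl fun q _ => ?_
    simp only [← sum_add_distrib, add_mul, smul_add, h12]
  simp only [right, ← smul_sum, left, smul_smul]
  norm_num

end Sums

theorem sum_smul_mul_mul_mul_eq_zero_of_anticomm {ι K A : Type*} [Fintype ι] [CommSemiring K] [Ring A]
    [Algebra K A] [IsAddTorsionFree A] (e d : ι → A) (c : ι → ι → K)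
    (he : ∀ p r, e r * e p = -(e p * e r)) (hde : ∀ q r, d q * e r = c q r • 1 - e r * d q)
    (S : ι → ι → ι → ι → K) (h13 : ∀ p q r s, S r q p s = S p q r s)
    (hc : ∀ p s, ∑ q, ∑ r, S p q r s * c q r = 0) :
    ∑ p, ∑ q, ∑ r, ∑ s, S p q r s • (e p * d q * (e r * d s)) = 0 := by
  have split : ∀ p q r s, S p q r s • (e p * d q * (e r * d s)) =
      (S p q r s * c q r) • (e p * d s) - S p q r s • (e p * e r * (d q * d s)) := by
    intro p q r s
    rw [show e p * d q * (e r * d s) = e p * (d q * e r) * d s by noncomm_ring, hde]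
    simp only [mul_sub, sub_mul, smul_sub, mul_smul_comm, smul_mul_assoc, mul_one, smul_smul,
      mul_assoc]
  have contraction : ∑ p, ∑ q, ∑ r, ∑ s, (S p q r s * c q r) • (e p * d s) = 0 := by
    refine sum_eq_zero fun p _ => ?_
    calc ∑ q, ∑ r, ∑ s, (S p q r s * c q r) • (e p * d s)
        = ∑ q, ∑ s, ∑ r, (S p q r s * c q r) • (e p * d s) :=
          sum_congr rfl fun q _ => sum_comm
      _ = ∑ s, ∑ q, ∑ r, (S p q r s * c q r) • (e p * d s) := sum_comm
      _ = 0 := by simp only [← sum_smul, hc, zero_smul, sum_const_zero]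
  have antisymm : ∑ p, ∑ q, ∑ r, ∑ s, S p q r s • (e p * e r * (d q * d s)) = 0 := by
    rw [sum_congr rfl fun p _ => sum_comm]
    refine sum_sum_eq_zero_of_antisymm _ fun p r => ?_
    simp only [← sum_neg_distrib]
    refine sum_congr rfl fun q _ => sum_congr rfl fun s _ => ?_
    rw [h13, he, neg_mul, smul_neg]
  simp only [split, sum_sub_distrib, contraction, antisymm, sub_zero]

theorem sgn_neg {a : ℤ} (h : a ≠ 0) : sgn (-a) = -sgn a := by
  unfold sgn
  split_ifs <;> first | omega | norm_num

theorem sgn_mul_self (a : ℤ) : sgn a * sgn a = 1 := by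
  unfold sgn
  split_ifs <;> norm_num

theorem sgn_mul {a b : ℤ} (ha : a ≠ 0) (hb : b ≠ 0) : sgn (a * b) = sgn a * sgn b := by
  unfold sgn
  rcases ha.lt_or_gt with ha | ha <;> rcases hb.lt_or_gt with hb | hb <;>
    simp [ha, hb, mul_pos_of_neg_of_neg, mul_neg_of_pos_of_neg, mul_neg_of_neg_of_pos,
      not_lt_of_gt]

namespace Idx

variable {n : ℕ}

theorem val_ne_zero (α : Idx n) : α.1 ≠ 0 :=
  (mem_erase.mp α.2).1

@[simp]
theorem val_negI (α : Idx n) : α.negI.1 = -α.1 := rfl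

@[simp]
theorem negI_negI (α : Idx n) : α.negI.negI = α :=
  Subtype.ext (neg_neg _)

theorem sum_comp_negI {M : Type*} [AddCommMonoid M] (f : Idx n → M) :
    ∑ α : Idx n, f α.negI = ∑ α, f α :=
  Equiv.sum_comp (Function.Involutive.toPerm Idx.negI negI_negI) f

end Idx

section Clifford

variable {n : ℕ}

def symplecticForm (α β : Idx n) : ℂ := if α = β.negI then sgn α.1 else 0

theorem symplecticForm_swap (α β : Idx n) : symplecticForm β α = -symplecticForm α β := by
  unfold symplecticForm
  by_cases h : α = β.negI
  · subst h
    simp [sgn_neg β.val_ne_zero]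
  · have h' : β ≠ α.negI := fun h' => h (by rw [h', Idx.negI_negI])
    simp [h, h']

theorem sum_sum_mul_symplecticForm_eq_zero (T : Idx n → Idx n → ℂ)
    (hT : ∀ q r, T q r = T r q) : ∑ q, ∑ r, T q r * symplecticForm r q = 0 :=
  sum_sum_eq_zero_of_antisymm _ fun q r => by rw [symplecticForm_swap, hT, mul_neg]

theorem epsOp_mul_epsOp_swap (α β : Idx n) : epsOp β * epsOp α = -(epsOp α * epsOp β) := by
  refine eq_neg_of_add_eq_zero_left (LinearMap.ext fun x => ?_)
  simp only [epsOp, Module.End.mul_apply, LinearMap.mulLeft_apply, LinearMap.add_apply,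
    LinearMap.zero_apply]
  rw [← mul_assoc, ← mul_assoc, ← add_mul, ExteriorAlgebra.ι_add_mul_swap, zero_mul]

theorem dagOp_mul_epsOp (q m : Idx n) :
    dagOp q * epsOp m = (if q = m then 1 else 0 : ℂ) • 1 - epsOp m * dagOp q := by
  refine LinearMap.ext fun x => ?_
  simp only [dagOp, epsOp, Module.End.mul_apply, LinearMap.mulLeft_apply, LinearMap.sub_apply,
    LinearMap.smul_apply, Module.End.one_apply, CliffordAlgebra.contractLeft_ι_mul]
  simp [Module.Basis.coord_apply, Pi.single_apply]

noncomputable def epsOpDual (p : Idx n) : Module.End ℂ (ExteriorAlgebra ℂ (Idx n → ℂ)) :=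
  sgn p.1 • epsOp p.negI

theorem epsOpDual_mul_epsOpDual_swap (p r : Idx n) :
    epsOpDual r * epsOpDual p = -(epsOpDual p * epsOpDual r) := by
  simp only [epsOpDual, smul_mul_smul_comm, epsOp_mul_epsOp_swap p.negI, smul_neg, mul_comm]

theorem dagOp_mul_epsOpDual (q r : Idx n) :
    dagOp q * epsOpDual r = symplecticForm r q • 1 - epsOpDual r * dagOp q := by
  have hσ : symplecticForm r q = sgn r.1 * (if q = r.negI then 1 else 0) := by
    by_cases h : q = r.negI
    · simp [symplecticForm, h]
    · have h' : r ≠ q.negI := fun h' => h (by rw [h', Idx.negI_negI])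
      simp [symplecticForm, h, h']
  rw [epsOpDual, mul_smul_comm, dagOp_mul_epsOp, hσ, smul_sub, smul_smul, smul_mul_assoc]

noncomputable def piX (α β : Idx n) : Module.End ℂ (ExteriorAlgebra ℂ (Idx n → ℂ)) :=
  epsOp α * dagOp β - sgn (α.1 * β.1) • (epsOp β.negI * dagOp α.negI)

theorem sgn_smul_piX_negI (p q : Idx n) :
    sgn p.1 • piX p.negI q = epsOpDual p * dagOp q + epsOpDual q * dagOp p := by
  have hsgn : sgn p.1 * sgn (p.negI.1 * q.1) = -sgn q.1 := by
    rw [Idx.val_negI, neg_mul, sgn_neg (mul_ne_zero p.val_ne_zero q.val_ne_zero),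
      sgn_mul p.val_ne_zero q.val_ne_zero, mul_neg, ← mul_assoc, sgn_mul_self, one_mul]
  rw [piX, Idx.negI_negI, smul_sub, smul_smul, hsgn, neg_smul, sub_neg_eq_add, epsOpDual,
    epsOpDual, smul_mul_assoc, smul_mul_assoc]

end Clifford

/-- Let `S α β γ δ = σ(𝔕(ε_α, ε_β) ε_γ, ε_δ)` be the coefficient tensor of a curvature term
`𝔕`, assumed totally symmetric in its four arguments. Then in the Clifford realization
`π_a(x_{αβ}) = ε_α ε_β† − sign(αβ) ε_{−β} ε_{−α}†` on the exterior algebra, the curvature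
endomorphism `Σ_{α,β} sign(α) π_a(x_{αβ} 𝔕(ε_{−α}, ε_β))`, whose coefficient expansion is
`(1/2) Σ_{α,β,δ,γ} sign(α) sign(δ) S(−α, β, γ, −δ) π_a(x_{αβ}) π_a(x_{δγ})`, vanishes. -/
theorem curvature_endomorphism_vanishes (n : ℕ)
    (S : Idx n → Idx n → Idx n → Idx n → ℂ)
    (hswap12 : ∀ p q r s, S p q r s = S q p r s)
    (hswap23 : ∀ p q r s, S p q r s = S p r q s)
    (hswap34 : ∀ p q r s, S p q r s = S p q s r)
    (X : Idx n → Idx n → Module.End ℂ (ExteriorAlgebra ℂ (Idx n → ℂ)))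
    (hX : ∀ α β, X α β = epsOp α * dagOp β - sgn (α.1 * β.1) • (epsOp β.negI * dagOp α.negI)) :
    (1 / 2 : ℂ) • ∑ α : Idx n, ∑ β : Idx n, ∑ δ : Idx n, ∑ γ : Idx n,
        (sgn α.1 * sgn δ.1 * S α.negI β γ δ.negI) • (X α β * X δ γ) = 0 := by
  obtain rfl : X = piX := funext₂ hX
  have : IsAddTorsionFree (Module.End ℂ (ExteriorAlgebra ℂ (Idx n → ℂ))) :=
    IsAddTorsionFree.of_isTorsionFree ℂ _
  have reindex : ∑ α : Idx n, ∑ β : Idx n, ∑ δ : Idx n, ∑ γ : Idx n,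
      (sgn α.1 * sgn δ.1 * S α.negI β γ δ.negI) • (piX α β * piX δ γ) =
      ∑ p, ∑ q, ∑ r, ∑ s, S p q r s • ((epsOpDual p * dagOp q + epsOpDual q * dagOp p) *
        (epsOpDual r * dagOp s + epsOpDual s * dagOp r)) := by
    rw [← Idx.sum_comp_negI]
    refine sum_congr rfl fun p _ => sum_congr rfl fun q _ => ?_
    rw [← Idx.sum_comp_negI]
    refine sum_congr rfl fun r _ => sum_congr rfl fun s _ => ?_
    rw [← sgn_smul_piX_negI, ← sgn_smul_piX_negI, smul_mul_smul_comm, smul_smul, Idx.negI_negI,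
      Idx.negI_negI, Idx.val_negI, Idx.val_negI, sgn_neg p.val_ne_zero, sgn_neg r.val_ne_zero,
      ← hswap34]
    congr 1
    ring
  have h13 : ∀ p q r s, S r q p s = S p q r s := fun p q r s => by
    rw [hswap12, hswap23, hswap12 q]
  rw [reindex, sum_smul_add_swap_mul_add_swap _ S (fun _ _ _ _ => (hswap12 _ _ _ _).symm)
      (fun _ _ _ _ => (hswap34 _ _ _ _).symm),
    sum_smul_mul_mul_mul_eq_zero_of_anticomm epsOpDual dagOp (fun q r => symplecticForm r q)
      epsOpDual_mul_epsOpDual_swap dagOp_mul_epsOpDual S h13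
      (fun p s => sum_sum_mul_symplecticForm_eq_zero _ fun q r => hswap23 p q r s),
    smul_zero, smul_zero]
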